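/- For every natural number m ≥ 1, the element (a₃a₁a₂)ᵐ·a₃·a₁ is conjugate in B₃ to the element a₂·a₁³·a₂·(a₃a₁a₂)^{m-1}. -/
import Mathlib


/-- The braid relation σ₁σ₂σ₁ = σ₂σ₁σ₂ as a relator in the free group on two generators. -/
def braidRel : Set (FreeGroup (Fin 2)) :=
  {FreeGroup.of 0 * FreeGroup.of 1 * FreeGroup.of 0 *
    (FreeGroup.of 1 * FreeGroup.of 0 * FreeGroup.of 1)⁻¹}

/-- The braid group on three strands, presented as ⟨σ₁, σ₂ | σ₁σ₂σ₁ = σ₂σ₁σ₂⟩. -/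
abbrev B₃ : Type := PresentedGroup braidRel

/-- The first standard generator σ₁ of B₃. -/
def σ₁ : B₃ := PresentedGroup.of 0

/-- The second standard generator σ₂ of B₃. -/
def σ₂ : B₃ := PresentedGroup.of 1

def a₁ : B₃ := σ₁
def a₂ : B₃ := σ₂
def a₃ : B₃ := σ₁⁻¹ * σ₂ * σ₁

lemma braid_rel : σ₁ * σ₂ * σ₁ = σ₂ * σ₁ * σ₂ := by
  have h : (QuotientGroup.mk (FreeGroup.of 0 * FreeGroup.of 1 * FreeGroup.of 0 *
      (FreeGroup.of 1 * FreeGroup.of 0 * FreeGroup.of 1)⁻¹) : B₃) = 1 := by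
    rw [QuotientGroup.eq_one_iff]
    exact Subgroup.subset_normalClosure rfl
  have h2 : (QuotientGroup.mk (FreeGroup.of 0 * FreeGroup.of 1 * FreeGroup.of 0 *
      (FreeGroup.of 1 * FreeGroup.of 0 * FreeGroup.of 1)⁻¹) : B₃)
      = σ₁ * σ₂ * σ₁ * (σ₂ * σ₁ * σ₂)⁻¹ := rfl
  rw [h2] at h
  group at h ⊢
  exact mul_inv_eq_one.mp h

lemma key : a₃ * a₁ * (a₃ * a₁ * a₂) = a₂ * a₁ ^ 3 * a₂ := by
  have h := braid_rel
  simp only [a₁, a₂, a₃]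
  rw [show (σ₁⁻¹ * σ₂ * σ₁ * σ₁ * (σ₁⁻¹ * σ₂ * σ₁ * σ₁ * σ₂))
      = σ₁⁻¹ * (σ₂ * σ₁ * σ₂) * (σ₁ * σ₁ * σ₂) by group]
  rw [← h, show (σ₁:B₃) ^ 3 = σ₁ * σ₁ * σ₁ by rw [pow_succ, pow_succ, pow_one]]
  group

/-- For every natural m ≥ 1, (a₃a₁a₂)ᵐ·a₃·a₁ is conjugate to a₂·a₁³·a₂·(a₃a₁a₂)^(m-1). -/
theorem conj_pow_a₃a₁ (m : ℕ) (hm : 1 ≤ m) :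
    IsConj ((a₃ * a₁ * a₂) ^ m * a₃ * a₁)
      (a₂ * a₁ ^ 3 * a₂ * (a₃ * a₁ * a₂) ^ (m - 1)) := by
  have hc : (a₃ * a₁ * a₂) ^ m = (a₃ * a₁ * a₂) * (a₃ * a₁ * a₂) ^ (m - 1) := by
    conv_lhs => rw [show m = 1 + (m - 1) by omega]
    rw [pow_add, pow_one]
  have h1 : IsConj ((a₃ * a₁ * a₂) ^ m * a₃ * a₁)
      (a₃ * a₁ * (a₃ * a₁ * a₂) ^ m) := by
    rw [isConj_iff]
    exact ⟨(a₃ * a₁), by group⟩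
  have h2 : a₃ * a₁ * (a₃ * a₁ * a₂) ^ m
      = a₂ * a₁ ^ 3 * a₂ * (a₃ * a₁ * a₂) ^ (m - 1) := by
    rw [hc, ← mul_assoc, key]
  exact h2 ▸ h1
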